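/- Let X be a complex Banach space with dim X ≥ 3 and let A ∈ B(X) with A ≠ 0. Then the range of A is one-dimensional if and only if for every T ∈ B(X), δ(ATA) ∈ {1, 2} and δ(TAT) ∈ {1, 2}. -/

import Mathlib

/-- The ascent of a bounded linear operator: the least `n : ℕ` with
`ker (T ^ n) = ker (T ^ (n+1))`, and `⊤` (i.e. `∞`) if no such `n` exists. -/
noncomputable def ascent {X : Type*} [NormedAddCommGroup X] [NormedSpace ℂ X]
    (T : X →L[ℂ] X) : ℕ∞ :=
  sInf (Nat.cast '' {m : ℕ | LinearMap.ker (↑(T ^ m) : X →ₗ[ℂ] X) = LinearMap.ker (↑(T ^ (m + 1)) : X →ₗ[ℂ] X)})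

/-- The descent of a bounded linear operator: the least `n : ℕ` with
`range (T ^ n) = range (T ^ (n+1))`, and `⊤` (i.e. `∞`) if no such `n` exists. -/
noncomputable def descent {X : Type*} [NormedAddCommGroup X] [NormedSpace ℂ X]
    (T : X →L[ℂ] X) : ℕ∞ :=
  sInf (Nat.cast '' {m : ℕ | LinearMap.range (↑(T ^ m) : X →ₗ[ℂ] X) = LinearMap.range (↑(T ^ (m + 1)) : X →ₗ[ℂ] X)})

/-!
If `rank A = 1`, then `ATA` and `TAT` have rank at most one. The range of such an operator `S`
is a proper subspace of `X`, and `range S²`, a subspace of the line `range S`, is either `0` or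
`range S`; in both cases `range S² = range S³`, so the descent of `S` is `1` or `2`.

Conversely, if `A ≠ 0` does not have rank one, we find `T` for which `ATA` or `TAT` is nilpotent
of order exactly three, hence has descent `3`; by Hahn–Banach, `T` may be prescribed freely on a
finite independent family. If `A = c • 1`, then `ATA = c² T` and `T` is a shift
`e₀ ↦ e₁ ↦ e₂ ↦ 0`. Otherwise there are `a, b` with `a, A a, A b` independent, and `T` is chosen
with range in a plane `P` on which `(TAT)²` vanishes, while `(TAT)² ≠ 0`: either `T` inverts `A`
on `P` and maps `P` nilpotently to itself, or `T` projects `P` onto a line.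
-/

open Submodule

lemma eq_bot_or_eq_of_le_of_rank_le_one {K V : Type*} [DivisionRing K] [AddCommGroup V] [Module K V]
    {p q : Submodule K V} (hpq : p ≤ q) (hq : Module.rank K q ≤ 1) : p = ⊥ ∨ p = q := by
  obtain ⟨u, rfl⟩ := (rank_le_one_iff_isPrincipal q).1 hq
  refine or_iff_not_imp_left.2 fun hp => le_antisymm hpq ?_
  obtain ⟨x, hxp, hx0⟩ := p.ne_bot_iff.1 hp
  obtain ⟨c, rfl⟩ := mem_span_singleton.1 (hpq hxp)
  have hc : c ≠ 0 := by rintro rfl; simp at hx0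
  simpa [smul_smul, hc, span_singleton_le_iff_mem] using p.smul_mem c⁻¹ hxp

lemma exists_notMem_span_pair {K V : Type*} [DivisionRing K] [AddCommGroup V] [Module K V]
    (hV : 2 < Module.rank K V) (y z : V) : ∃ x, x ∉ span K {y, z} := by
  classical
  by_contra! h
  have htop : span K {y, z} = ⊤ := eq_top_iff.2 fun x _ => h x
  have := rank_span_finset_le (R := K) ({y, z} : Finset V)
  rw [Finset.coe_pair, htop, rank_top] at this
  exact (this.trans (by exact_mod_cast Finset.card_le_two)).not_gt hV

lemma not_range_le_span_singleton {K V W : Type*} [DivisionRing K] [AddCommGroup V] [Module K V]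
    [AddCommGroup W] [Module K W] {f : V →ₗ[K] W} (hf : 1 < Module.rank K (LinearMap.range f))
    (w : W) : ¬ LinearMap.range f ≤ span K {w} := fun h =>
  ((rank_mono h).trans ((rank_span_le _).trans_eq (Cardinal.mk_singleton w))).not_gt hf

lemma exists_clm_apply_eq_of_linearIndependent {𝕜 E F ι : Type*} [RCLike 𝕜] [Finite ι]
    [NormedAddCommGroup E] [NormedSpace 𝕜 E] [NormedAddCommGroup F] [NormedSpace 𝕜 F]
    {v : ι → E} (hv : LinearIndependent 𝕜 v) (w : ι → F) {W : Submodule 𝕜 F}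
    (hw : ∀ i, w i ∈ W) : ∃ T : E →L[𝕜] F, (∀ i, T (v i) = w i) ∧ ∀ x, T x ∈ W := by
  have : FiniteDimensional 𝕜 (span 𝕜 (Set.range v)) := .span_of_finite 𝕜 (Set.finite_range v)
  obtain ⟨P, hP⟩ := ClosedComplemented.of_finiteDimensional (span 𝕜 (Set.range v))
  let b := Module.Basis.span hv
  let φ := LinearMap.toContinuousLinearMap (b.constr 𝕜 w)
  refine ⟨φ.comp P, fun i => ?_, fun x => ?_⟩
  · have : P (v i) = b i := by rw [Module.Basis.span_apply]; exact hP ⟨v i, _⟩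
    simp [φ, this]
  · have : φ (P x) ∈ span 𝕜 (Set.range w) := by
      rw [← b.constr_range 𝕜]
      exact LinearMap.mem_range_self _ _
    exact span_le.2 (Set.range_subset_iff.2 hw) this

lemma range_coe_eq_bot_iff {R E F : Type*} [Semiring R] [TopologicalSpace E] [AddCommMonoid E]
    [Module R E] [TopologicalSpace F] [AddCommMonoid F] [Module R F] {T : E →L[R] F} :
    LinearMap.range (T : E →ₗ[R] F) = ⊥ ↔ T = 0 := by
  rw [LinearMap.range_eq_bot]
  exact ContinuousLinearMap.coe_injective.eq_iff' rfl

section Descent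

variable {X : Type*} [NormedAddCommGroup X] [NormedSpace ℂ X] (S : X →L[ℂ] X)

lemma range_pow_succ_eq_map (m : ℕ) :
    LinearMap.range (↑(S ^ (m + 1)) : X →ₗ[ℂ] X) =
      (LinearMap.range (↑(S ^ m) : X →ₗ[ℂ] X)).map (S : X →ₗ[ℂ] X) := by
  rw [pow_succ', ContinuousLinearMap.toLinearMap_mul, Module.End.mul_eq_comp, LinearMap.range_comp]

lemma range_pow_succ_eq_of_le {m k : ℕ}
    (h : LinearMap.range (↑(S ^ m) : X →ₗ[ℂ] X) = LinearMap.range (↑(S ^ (m + 1)) : X →ₗ[ℂ] X))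
    (hmk : m ≤ k) :
    LinearMap.range (↑(S ^ k) : X →ₗ[ℂ] X) = LinearMap.range (↑(S ^ (k + 1)) : X →ₗ[ℂ] X) := by
  induction k, hmk using Nat.le_induction with
  | base => exact h
  | succ k _ ih => rw [range_pow_succ_eq_map S k, range_pow_succ_eq_map S (k + 1), ih]

lemma descent_eq_of_range_pow_eq (n : ℕ)
    (hn : LinearMap.range (↑(S ^ n) : X →ₗ[ℂ] X) = LinearMap.range (↑(S ^ (n + 1)) : X →ₗ[ℂ] X))
    (hlt : ∀ m < n,
      LinearMap.range (↑(S ^ m) : X →ₗ[ℂ] X) ≠ LinearMap.range (↑(S ^ (m + 1)) : X →ₗ[ℂ] X)) :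
    descent S = n := by
  refine le_antisymm (sInf_le ⟨n, hn, rfl⟩) (le_sInf ?_)
  rintro _ ⟨m, hm, rfl⟩
  by_contra! hmn
  exact hlt m (by exact_mod_cast hmn) hm

lemma descent_eq_of_pow_eq_zero {n : ℕ} (hn : S ^ n ≠ 0) (hn1 : S ^ (n + 1) = 0) :
    descent S = (n + 1 : ℕ) := by
  have hbot : LinearMap.range (↑(S ^ (n + 1)) : X →ₗ[ℂ] X) = ⊥ := range_coe_eq_bot_iff.2 hn1
  refine descent_eq_of_range_pow_eq S _ ?_ fun m hm h => hn ?_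
  · rw [hbot, eq_comm, range_coe_eq_bot_iff, pow_succ', hn1, mul_zero]
  · rw [← range_coe_eq_bot_iff, range_pow_succ_eq_of_le S h (Nat.lt_succ_iff.1 hm), hbot]

lemma descent_mem_of_rank_range_le_one (hX : 1 < Module.rank ℂ X)
    (hS : Module.rank ℂ (LinearMap.range (S : X →ₗ[ℂ] X)) ≤ 1) :
    descent S ∈ ({1, 2} : Set ℕ∞) := by
  have h0 : LinearMap.range (↑(S ^ 0) : X →ₗ[ℂ] X) ≠ LinearMap.range (↑(S ^ 1) : X →ₗ[ℂ] X) := by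
    intro h
    rw [pow_zero, ContinuousLinearMap.toLinearMap_one, Module.End.one_eq_id, LinearMap.range_id,
      pow_one] at h
    rw [← h, rank_top] at hS
    exact hS.not_gt hX
  have h23 : LinearMap.range (↑(S ^ 2) : X →ₗ[ℂ] X) = LinearMap.range (↑(S ^ 3) : X →ₗ[ℂ] X) := by
    have hmap : (LinearMap.range (S : X →ₗ[ℂ] X)).map (S : X →ₗ[ℂ] X) =
        LinearMap.range (↑(S ^ 2) : X →ₗ[ℂ] X) := by
      rw [range_pow_succ_eq_map S 1, pow_one]
    rcases eq_bot_or_eq_of_le_of_rank_le_one (hmap ▸ LinearMap.map_le_range) hS with h | h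
    · rw [range_pow_succ_eq_map S 2, h, Submodule.map_bot]
    · rw [range_pow_succ_eq_map S 2, h, hmap, h]
  by_cases h12 : LinearMap.range (↑(S ^ 1) : X →ₗ[ℂ] X) = LinearMap.range (↑(S ^ 2) : X →ₗ[ℂ] X)
  · left
    exact descent_eq_of_range_pow_eq S 1 h12 fun m hm => by rwa [Nat.lt_one_iff.1 hm]
  · right
    refine descent_eq_of_range_pow_eq S 2 h23 fun m hm => ?_
    interval_cases m
    exacts [h0, h12]

end Descent

section Construction

variable {X : Type*} [NormedAddCommGroup X] [NormedSpace ℂ X]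

lemma rank_range_mul_mul_le (T A U : X →L[ℂ] X) :
    Module.rank ℂ (LinearMap.range (↑(T * A * U) : X →ₗ[ℂ] X)) ≤
      Module.rank ℂ (LinearMap.range (A : X →ₗ[ℂ] X)) := by
  rw [ContinuousLinearMap.toLinearMap_mul, ContinuousLinearMap.toLinearMap_mul,
    Module.End.mul_eq_comp, Module.End.mul_eq_comp]
  exact (LinearMap.rank_comp_le_left _ _).trans (LinearMap.rank_comp_le_right _ _)

lemma one_lt_rank_range {A : X →L[ℂ] X} (hA : A ≠ 0)
    (hA1 : Module.rank ℂ (LinearMap.range (A : X →ₗ[ℂ] X)) ≠ 1) :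
    1 < Module.rank ℂ (LinearMap.range (A : X →ₗ[ℂ] X)) := by
  refine lt_of_le_of_ne (Cardinal.one_le_iff_ne_zero.2 fun h => hA ?_) hA1.symm
  rwa [Submodule.rank_eq_zero, range_coe_eq_bot_iff] at h

lemma descent_eq_three_of_apply_mem_span_pair {S : X →L[ℂ] X} {a b x : X}
    (hS : ∀ y, S y ∈ span ℂ {a, b}) (ha : S (S a) = 0) (hb : S (S b) = 0) (hx : S (S x) ≠ 0) :
    descent S = 3 := by
  have h2 : S ^ 2 ≠ 0 := fun h => hx (by simpa [pow_two] using congr($h x))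
  have h3 : S ^ 3 = 0 := by
    ext y
    obtain ⟨s, t, hst⟩ := mem_span_pair.1 (hS y)
    have : (S ^ 3) y = S (S (S y)) := rfl
    simp [this, ← hst, ha, hb]
  exact_mod_cast descent_eq_of_pow_eq_zero S h2 h3

lemma exists_descent_mul_mul_eq_three_of_apply_eq_smul {A : X →L[ℂ] X} {c : ℂ}
    (hA : ∀ x, A x = c • x) (hc : c ≠ 0) (hX : 3 ≤ Module.rank ℂ X) :
    ∃ T : X →L[ℂ] X, descent (A * T * A) = 3 := by
  obtain ⟨e, he⟩ := exists_linearIndependent_of_le_rank hX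
  obtain ⟨T, hTe, hT⟩ := exists_clm_apply_eq_of_linearIndependent he ![e 1, e 2, 0]
    (W := span ℂ {e 1, e 2}) (by intro i; fin_cases i <;> simp <;> exact subset_span (by simp))
  have hS : ∀ x, (A * T * A) x = (c * c) • T x := fun x => by
    simp [hA, smul_smul]
  refine ⟨T, descent_eq_three_of_apply_mem_span_pair (a := e 1) (b := e 2) (x := e 0)
    (fun y => ?_) ?_ ?_ ?_⟩
  · exact hS y ▸ smul_mem _ _ (hT y)
  · simp [hS, hTe 1, hTe 2]
  · simp [hS, hTe 2]
  · simp [hS, hTe 0, hTe 1, hc, he.ne_zero 2]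

lemma descent_mul_mul_eq_three_of_leftInverse {A T : X →L[ℂ] X} {a b : X} {s : ℂ}
    (hT : ∀ x, T x ∈ span ℂ {a, b}) (hAa : T (A a) = a) (hAb : T (A b) = b)
    (ha : T a = 0) (hb : T b = s • a) (hs : s ≠ 0) (ha0 : a ≠ 0) :
    descent (T * A * T) = 3 := by
  have hS : ∀ x, (T * A * T) x = T (A (T x)) := fun _ => rfl
  refine descent_eq_three_of_apply_mem_span_pair (x := A b) (fun y => hT _) ?_ ?_ ?_ <;>
    simp [hS, ha, hb, hAa, hAb, hs, ha0]

lemma descent_mul_mul_eq_three_of_projection {A T : X →L[ℂ] X} {a b : X} {c d : ℂ}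
    (hT : ∀ x, T x ∈ span ℂ {a, b}) (ha : T a = a) (hb : T b = 0)
    (hAa : T (A a) = b) (hAb : T (A b) = c • a + d • b) (hc : c ≠ 0) (hb0 : b ≠ 0) :
    descent (T * A * T) = 3 := by
  have hS : ∀ x, (T * A * T) x = T (A (T x)) := fun _ => rfl
  refine descent_eq_three_of_apply_mem_span_pair (x := A a) (fun y => hT _) ?_ ?_ ?_ <;>
    simp [hS, ha, hb, hAa, hAb, hc, hb0]

lemma exists_descent_mul_mul_eq_three_of_notMem_span {A : X →L[ℂ] X} {a b : X}
    (hv : LinearIndependent ℂ ![a, A a, A b]) (hb : b ∉ span ℂ {a, A a, A b}) :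
    ∃ T : X →L[ℂ] X, descent (T * A * T) = 3 := by
  have hv' : LinearIndependent ℂ ![b, a, A a, A b] :=
    linearIndependent_finCons.2 ⟨hv, by
      rwa [Matrix.range_cons, Matrix.range_cons_cons_empty, Set.singleton_union]⟩
  obtain ⟨T, hTv, hT⟩ := exists_clm_apply_eq_of_linearIndependent hv' ![a, 0, a, b]
    (W := span ℂ {a, b}) (by intro i; fin_cases i <;> simp <;> exact subset_span (by simp))
  exact ⟨T, descent_mul_mul_eq_three_of_leftInverse hT (hTv 2) (hTv 3) (hTv 1)
    (by simpa using hTv 0) one_ne_zero (hv.ne_zero 0)⟩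

lemma exists_descent_mul_mul_eq_three_of_add_eq {A : X →L[ℂ] X} {a b : X} {p q : ℂ}
    (hv : LinearIndependent ℂ ![a, A a, A b]) (hb : p • a + q • A a = b) :
    ∃ T : X →L[ℂ] X, descent (T * A * T) = 3 := by
  have hq : q ≠ 0 := by
    rintro rfl
    have := Fintype.linearIndependent_iff.1 hv ![0, p, -1] (by simp [Fin.sum_univ_three, ← hb]) 2
    simp at this
  obtain ⟨T, hTv, hT⟩ := exists_clm_apply_eq_of_linearIndependent hv ![0, a, b]
    (W := span ℂ {a, b}) (by intro i; fin_cases i <;> simp <;> exact subset_span (by simp))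
  have hTa : T a = 0 := hTv 0
  have hTAa : T (A a) = a := hTv 1
  refine ⟨T, descent_mul_mul_eq_three_of_leftInverse hT hTAa (hTv 2) hTa ?_ hq (hv.ne_zero 0)⟩
  simp [← hb, hTa, hTAa]

lemma exists_descent_mul_mul_eq_three_of_add_add_eq {A : X →L[ℂ] X} {a b : X} {p q r : ℂ}
    (hv : LinearIndependent ℂ ![a, A a, A b]) (hb : p • a + q • A a + r • A b = b) (hr : r ≠ 0) :
    ∃ T : X →L[ℂ] X, descent (T * A * T) = 3 := by
  -- The construction needs the coefficient of `a` to be nonzero; shifting `b` by `(1 - p) • a`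
  -- makes it `1`.
  set b' := b + (1 - p) • a with hb'_def
  have hb' : a + q • A a + r • A b = b' := by linear_combination (norm := module) hb
  have hb'0 : b' ≠ 0 := by
    intro h
    have := Fintype.linearIndependent_iff.1 hv ![1, q, r] (by simp [Fin.sum_univ_three, hb', h]) 0
    simp at this
  obtain ⟨T, hTv, hT⟩ := exists_clm_apply_eq_of_linearIndependent hv ![a, b', -r⁻¹ • (a + q • b')]
    (W := span ℂ {a, b'}) (by
      intro i; fin_cases i
      exacts [subset_span (by simp), subset_span (by simp),
        smul_mem _ _ (add_mem (subset_span (by simp)) (smul_mem _ _ (subset_span (by simp))))])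
  have hTa : T a = a := hTv 0
  have hTAa : T (A a) = b' := hTv 1
  have hTAb : T (A b) = -r⁻¹ • (a + q • b') := hTv 2
  refine ⟨T, descent_mul_mul_eq_three_of_projection (c := -r⁻¹) (d := -r⁻¹ * q + (1 - p)) hT
    hTa ?_ hTAa ?_ (by simpa using hr) hb'0⟩
  · rw [← hb']
    simp only [map_add, map_smul, hTa, hTAa, hTAb, smul_smul, mul_neg, mul_inv_cancel₀ hr]
    module
  · simp only [hb'_def, map_add, map_smul, hTAa, hTAb]
    module

lemma exists_descent_mul_mul_eq_three {A : X →L[ℂ] X} {a b : X}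
    (hv : LinearIndependent ℂ ![a, A a, A b]) : ∃ T : X →L[ℂ] X, descent (T * A * T) = 3 := by
  by_cases hb : b ∈ span ℂ {a, A a, A b}
  · obtain ⟨p, z, hz, hbz⟩ := mem_span_insert.1 hb
    obtain ⟨q, r, rfl⟩ := mem_span_pair.1 hz
    rcases eq_or_ne r 0 with rfl | hr
    · exact exists_descent_mul_mul_eq_three_of_add_eq (p := p) (q := q) hv
        (by rw [hbz, zero_smul, add_zero])
    · exact exists_descent_mul_mul_eq_three_of_add_add_eq hv (by rw [add_assoc]; exact hbz.symm) hr
  · exact exists_descent_mul_mul_eq_three_of_notMem_span hv hb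

lemma exists_linearIndependent_self_apply_apply {A : X →L[ℂ] X} {v : X}
    (hX : 2 < Module.rank ℂ X) (hA : 1 < Module.rank ℂ (LinearMap.range (A : X →ₗ[ℂ] X)))
    (hv : LinearIndependent ℂ ![v, A v]) : ∃ a b : X, LinearIndependent ℂ ![a, A a, A b] := by
  by_cases hW : LinearMap.range (A : X →ₗ[ℂ] X) ≤ span ℂ {v, A v}
  · obtain ⟨x, hx⟩ := exists_notMem_span_pair hX v (A v)
    obtain ⟨a, haW, hAa⟩ : ∃ a, a ∉ span ℂ {v, A v} ∧ A a ≠ 0 := by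
      by_cases hAx : A x = 0
      · refine ⟨x + v, fun h => hx ?_, by simpa [hAx] using hv.ne_zero 1⟩
        simpa using sub_mem h (subset_span (by simp) : v ∈ span ℂ {v, A v})
      · exact ⟨x, hx, hAx⟩
    obtain ⟨_, ⟨b, rfl⟩, hb⟩ := SetLike.not_le_iff_exists.1 (not_range_le_span_singleton hA (A a))
    refine ⟨a, b, linearIndependent_finCons.2 ⟨?_, fun h => haW ?_⟩⟩
    · exact (LinearIndependent.pair_iff' hAa).2 fun t ht => hb (mem_span_singleton.2 ⟨t, ht⟩)
    · refine (span_le.2 ?_ |>.trans hW) h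
      simp [Set.insert_subset_iff]
  · obtain ⟨_, ⟨b, rfl⟩, hb⟩ := SetLike.not_le_iff_exists.1 hW
    refine ⟨v, b, ?_⟩
    have hsnoc : ![v, A v, A b] = Fin.snoc ![v, A v] (A b) := by ext i; fin_cases i <;> rfl
    rw [hsnoc]
    exact linearIndependent_finSnoc.2 ⟨hv, by rwa [Matrix.range_cons_cons_empty]⟩

lemma exists_descent_eq_three {A : X →L[ℂ] X} (hX : 3 ≤ Module.rank ℂ X)
    (hA : 1 < Module.rank ℂ (LinearMap.range (A : X →ₗ[ℂ] X))) :
    ∃ T : X →L[ℂ] X, descent (A * T * A) = 3 ∨ descent (T * A * T) = 3 := by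
  by_cases hsc : ∀ v, ¬ LinearIndependent ℂ ![v, (A : X →ₗ[ℂ] X) v]
  · obtain ⟨c, hc⟩ := LinearMap.exists_eq_smul_id_of_forall_notLinearIndependent hsc
    have hAc : ∀ x, A x = c • x := fun x => by simpa using LinearMap.congr_fun hc x
    have hc0 : c ≠ 0 := by
      rintro rfl
      exact not_range_le_span_singleton hA 0 (by simp [hc])
    obtain ⟨T, hT⟩ := exists_descent_mul_mul_eq_three_of_apply_eq_smul hAc hc0 hX
    exact ⟨T, .inl hT⟩
  · obtain ⟨v, hv⟩ := not_forall_not.1 hsc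
    have hX2 : 2 < Module.rank ℂ X := (by norm_num : (2 : Cardinal) < 3).trans_le hX
    obtain ⟨a, b, hab⟩ := exists_linearIndependent_self_apply_apply hX2 hA hv
    obtain ⟨T, hT⟩ := exists_descent_mul_mul_eq_three hab
    exact ⟨T, .inr hT⟩

end Construction

theorem rank_one_iff_descent_triple_mem_general {X : Type*} [NormedAddCommGroup X]
    [NormedSpace ℂ X] (hdim : 3 ≤ Module.rank ℂ X)
    (A : X →L[ℂ] X) (hA : A ≠ 0) :
    Module.rank ℂ (LinearMap.range (A : X →ₗ[ℂ] X)) = 1 ↔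
      ∀ T : X →L[ℂ] X,
        descent (A * T * A) ∈ ({1, 2} : Set ℕ∞) ∧ descent (T * A * T) ∈ ({1, 2} : Set ℕ∞) := by
  have hX : 1 < Module.rank ℂ X := (by norm_num : (1 : Cardinal) < 3).trans_le hdim
  refine ⟨fun hA1 T => ⟨?_, ?_⟩, fun h => ?_⟩
  · have hATA := rank_range_mul_mul_le 1 A (T * A)
    rw [one_mul, ← mul_assoc] at hATA
    exact descent_mem_of_rank_range_le_one _ hX (hA1 ▸ hATA)
  · exact descent_mem_of_rank_range_le_one _ hX (hA1 ▸ rank_range_mul_mul_le T A T)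
  · by_contra hA1
    obtain ⟨T, hT | hT⟩ := exists_descent_eq_three hdim (one_lt_rank_range hA hA1)
    · simpa [hT] using (h T).1
    · simpa [hT] using (h T).2

theorem rank_one_iff_descent_triple_mem {X : Type*} [NormedAddCommGroup X]
    [NormedSpace ℂ X] [CompleteSpace X] (hdim : 3 ≤ Module.rank ℂ X)
    (A : X →L[ℂ] X) (hA : A ≠ 0) :
    Module.rank ℂ (LinearMap.range (A : X →ₗ[ℂ] X)) = 1 ↔
      ∀ T : X →L[ℂ] X,
        descent (A * T * A) ∈ ({1, 2} : Set ℕ∞) ∧ descent (T * A * T) ∈ ({1, 2} : Set ℕ∞) :=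
  rank_one_iff_descent_triple_mem_general hdim A hA
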